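/- Let k ≥ 0 and let q be a real polynomial in (x,y,z) of total degree at most 2k+3. Suppose that the pair (∂_x q, ∂_y q) lies in N_k(x,y) ⊗ 𝒫_{k+1}(z), where N_k(x,y) := 𝐏_k(x,y) ⊕ (−y, x)𝒫̃_k(x,y), and that ∂_z q ∈ 𝒫_{k+1|k}. Then q ∈ 𝒫_{k+1|k+1}, i.e., q is a sum of monomials x^i y^j z^l with i+j ≤ k+1 and l ≤ k+1. -/

import Mathlib

open MvPolynomial

/-- Polynomials on `ℝ³`. -/
abbrev R3 := MvPolynomial (Fin 3) ℝ

/-- Membership in `𝒫_{a|b}`: the span of monomials `x^i y^j z^l` with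
`i + j ≤ a` and `l ≤ b`. -/
def memPab (a b : ℕ) (p : R3) : Prop :=
  ∀ m ∈ p.support, m 0 + m 1 ≤ a ∧ m 2 ≤ b

/-- Membership in `𝒫̃_d(x,y) ⊗ 𝒫_b(z)`: every monomial `x^i y^j z^l` has
`i + j = d` and `l ≤ b`. -/
def memHomXYZ (d b : ℕ) (p : R3) : Prop :=
  ∀ m ∈ p.support, m 0 + m 1 = d ∧ m 2 ≤ b

/- Auxiliary lemmas -/
lemma coeff_pderiv {σ : Type*} [DecidableEq σ] (i : σ) (q : MvPolynomial σ ℝ) (m : σ →₀ ℕ) :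
    coeff m (pderiv i q) = (m i + 1 : ℝ) * coeff (m + Finsupp.single i 1) q := by
  induction q using MvPolynomial.induction_on' with
  | monomial s a =>
    rw [pderiv_monomial, coeff_monomial, coeff_monomial]
    by_cases h : s = m + Finsupp.single i 1
    · subst h
      simp [Finsupp.add_apply, Finsupp.single_apply]
      ring
    · rw [if_neg h]
      by_cases h2 : s - Finsupp.single i 1 = m
      · have hsi : s i = 0 := by
          by_contra hsi
          apply h
          rw [← h2]
          ext j
          have h2j := DFunLike.congr_fun h2 j
          simp only [Finsupp.add_apply, Finsupp.tsub_apply, Finsupp.single_apply] at *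
          by_cases hj : i = j
          · subst hj; simp at h2j ⊢; omega
          · simp only [if_neg hj] at *; omega
        rw [if_pos h2, hsi]
        simp
      · rw [if_neg h2, mul_zero]
  | add p q hp hq => simp [hp, hq, mul_add]

lemma sub_apply_same (m : Fin 3 →₀ ℕ) (i : Fin 3) :
    ((m - Finsupp.single i 1 : Fin 3 →₀ ℕ)) i = m i - 1 := by
  simp [Finsupp.tsub_apply]

lemma sub_add_single (m : Fin 3 →₀ ℕ) (i : Fin 3) (h : 1 ≤ m i) :
    m - Finsupp.single i 1 + Finsupp.single i 1 = m :=
  tsub_add_cancel_of_le (by rwa [Finsupp.single_le_iff])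


/-- If `q` is a polynomial of total degree at most `2k+3` such that
`(∂ₓ q, ∂_y q) ∈ N_k(x,y) ⊗ 𝒫_{k+1}(z)` (with
`N_k(x,y) = 𝐏_k(x,y) ⊕ (−y,x)𝒫̃_k(x,y)`) and `∂_z q ∈ 𝒫_{k+1|k}`, then
`q ∈ 𝒫_{k+1|k+1}`. -/
theorem stmt_11 (k : ℕ) (q : R3)
    (hdeg : q.totalDegree ≤ 2 * k + 3)
    (hxy : ∃ a₁ a₂ p : R3, memPab k (k + 1) a₁ ∧ memPab k (k + 1) a₂ ∧
      memHomXYZ k (k + 1) p ∧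
      pderiv 0 q = a₁ - X 1 * p ∧ pderiv 1 q = a₂ + X 0 * p)
    (hz : memPab (k + 1) k (pderiv 2 q)) :
    memPab (k + 1) (k + 1) q := by
  obtain ⟨a₁, a₂, p, ha₁, ha₂, hp, hx, hy⟩ := hxy
  intro m hm
  rw [mem_support_iff] at hm
  rcases Nat.eq_zero_or_pos (m 2) with h2 | h2
  · refine ⟨?_, by omega⟩
    by_contra hbig
    push_neg at hbig
    have hca₁ : coeff (m - Finsupp.single 0 1) a₁ = 0 := by
      by_contra h
      have := (ha₁ _ (mem_support_iff.mpr h)).1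
      simp [Finsupp.tsub_apply, Finsupp.single_apply] at this
      omega
    have hca₂ : coeff (m - Finsupp.single 1 1) a₂ = 0 := by
      by_contra h
      have := (ha₂ _ (mem_support_iff.mpr h)).1
      simp [Finsupp.tsub_apply, Finsupp.single_apply] at this
      omega
    rcases Nat.eq_zero_or_pos (m 0) with h0 | h0
    · have hm1 : 1 ≤ m 1 := by omega
      have hc := coeff_pderiv 1 q (m - Finsupp.single 1 1)
      rw [sub_add_single m 1 hm1, hy, coeff_add, coeff_X_mul', hca₂] at hc
      rw [if_neg (by simp [Finsupp.tsub_apply, Finsupp.single_apply, h0])] at hc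
      rw [add_zero] at hc
      rcases mul_eq_zero.mp hc.symm with h | h
      · exact absurd h (by positivity)
      · exact hm h
    · have hc := coeff_pderiv 0 q (m - Finsupp.single 0 1)
      rw [sub_add_single m 0 h0, hx, coeff_sub, coeff_X_mul', hca₁] at hc
      rcases Nat.eq_zero_or_pos (m 1) with h1 | h1
      · rw [if_neg (by simp [Finsupp.tsub_apply, Finsupp.single_apply, h1])] at hc
        rw [sub_zero] at hc
        rcases mul_eq_zero.mp hc.symm with h | h
        · exact absurd h (by positivity)
        · exact hm h
      · rw [if_pos (by simp [Finsupp.tsub_apply, Finsupp.single_apply]; omega)] at hc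
        have hc' := coeff_pderiv 1 q (m - Finsupp.single 1 1)
        rw [sub_add_single m 1 h1, hy, coeff_add, coeff_X_mul', hca₂] at hc'
        rw [if_pos (by simp [Finsupp.tsub_apply, Finsupp.single_apply]; omega)] at hc'
        have heq : m - Finsupp.single 0 1 - Finsupp.single 1 1
            = m - Finsupp.single 1 1 - Finsupp.single 0 1 := by
          rw [tsub_tsub, tsub_tsub, add_comm]
        rw [heq] at hc
        rw [sub_apply_same] at hc hc'
        have hsum : (((m 0 - 1 : ℕ) : ℝ) + 1 + (((m 1 - 1 : ℕ) : ℝ) + 1)) * coeff m q = 0 := by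
          linear_combination -hc - hc'
        rcases mul_eq_zero.mp hsum with h | h
        · exact absurd h (by positivity)
        · exact hm h
  · have hc := coeff_pderiv 2 q (m - Finsupp.single 2 1)
    rw [sub_add_single m 2 h2] at hc
    have hmem : (m - Finsupp.single 2 1) ∈ (pderiv 2 q).support := by
      rw [mem_support_iff, hc]
      exact mul_ne_zero (by positivity) hm
    have := hz _ hmem
    simp [Finsupp.tsub_apply, Finsupp.single_apply] at this
    omega
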